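/- Scattering length of the regularized homogeneous potential in 2D: for W_β^R(x) = (W₀/R^β) χ_{B(0,R)}(x) in ℝ², the zero-energy radial scattering solution is φ(r) = (R^{β/2−1}/√(W₀/2)) · I₀(√(W₀/2) R^{−β/2} r) / I₁(√(W₀/2) R^{1−β/2}) for 0 < r < R and φ(r) = ln(r / a_β^R) for r ≥ R, which satisfies φ'' + φ'/r = (1/2)W_β^R φ on (0,R) and matches in value and derivative at r = R, with 2D scattering length a_β^R = R · exp( −(R^{β/2−1}/√(W₀/2)) · I₀(√(W₀/2) R^{1−β/2}) / I₁(√(W₀/2) R^{1−β/2}) ). -/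

import Mathlib

/-
Inside the ball the radial equation `φ'' + φ'/r = c² φ`, with `c² = W₀ / (2 R^β)`, is solved by
`I₀(c r)`: differentiating the series termwise gives `I₀' = I₁` and `I₁'(t) = I₀(t) - I₁(t)/t`.
Dividing by `c R I₁(c R)` makes the slope at `R` equal to `1/R`, the slope of `ln(r/a)`, and the
scattering length `a` is then fixed by matching the values at `R`; the two pieces glue to a `C¹`
function.
-/

/-- The modified Bessel function of the first kind of order 0,
`I₀(t) = ∑_k (t²/4)^k / (k!)²`. -/
noncomputable def besselI0 (t : ℝ) : ℝ :=
  ∑' k : ℕ, (t ^ 2 / 4) ^ k / ((Nat.factorial k : ℝ)) ^ 2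

/-- The modified Bessel function of the first kind of order 1,
`I₁(t) = (t/2) ∑_k (t²/4)^k / (k!(k+1)!)`. -/
noncomputable def besselI1 (t : ℝ) : ℝ :=
  t / 2 * ∑' k : ℕ, (t ^ 2 / 4) ^ k / ((Nat.factorial k : ℝ) * (Nat.factorial (k + 1) : ℝ))

/-- The 2D scattering length
`a_β^R = R·exp(−(R^{β/2−1}/√(W₀/2))·I₀(√(W₀/2)R^{1−β/2})/I₁(√(W₀/2)R^{1−β/2}))`
of the regularized potential `W_β^R = (W₀/R^β)χ_{B(0,R)}`. -/
noncomputable def aScat2D (W₀ R β : ℝ) : ℝ :=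
  R * Real.exp (-(R ^ (β / 2 - 1) / Real.sqrt (W₀ / 2) *
    (besselI0 (Real.sqrt (W₀ / 2) * R ^ (1 - β / 2)) /
      besselI1 (Real.sqrt (W₀ / 2) * R ^ (1 - β / 2)))))

/-- The zero-energy radial scattering solution of the regularized potential in 2D. -/
noncomputable def phiScat2D (W₀ R β : ℝ) : ℝ → ℝ := fun r =>
  if r < R then
    R ^ (β / 2 - 1) / Real.sqrt (W₀ / 2) *
      (besselI0 (Real.sqrt (W₀ / 2) * R ^ (-(β / 2)) * r) /
        besselI1 (Real.sqrt (W₀ / 2) * R ^ (1 - β / 2)))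
  else Real.log (r / aScat2D W₀ R β)

open scoped Nat
open Filter Topology Set

section EntireSeries

variable {a : ℕ → ℝ}

theorem summable_abs_mul_pow_of_abs_le_inv_factorial (ha : ∀ k, |a k| ≤ (k ! : ℝ)⁻¹) (r : ℝ) :
    Summable fun k => |a k| * r ^ k :=
  .of_norm_bounded (Real.summable_pow_div_factorial |r|) fun k => by
    rw [Real.norm_eq_abs, abs_mul, abs_abs, abs_pow, div_eq_inv_mul]
    exact mul_le_mul_of_nonneg_right (ha k) (by positivity)

theorem summable_mul_pow_of_summable_abs (ha : ∀ r, Summable fun k => |a k| * r ^ k) (x : ℝ) :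
    Summable fun k => a k * x ^ k :=
  .of_norm_bounded (ha |x|) fun k => by rw [Real.norm_eq_abs, abs_mul, abs_pow]

theorem hasDerivAt_tsum_mul_pow (ha : ∀ r, Summable fun k => |a k| * r ^ k) (x : ℝ) :
    HasDerivAt (fun y => ∑' k, a k * y ^ k) (∑' k, (k + 1) * a (k + 1) * x ^ k) x := by
  set M := |x| + 1
  have hM : 1 ≤ M := by simp [M]
  have hx : x ∈ Metric.ball (0 : ℝ) M := by simp [M]
  have hbound : ∀ k, ∀ y ∈ Metric.ball (0 : ℝ) M,
      ‖a k * (k * y ^ (k - 1))‖ ≤ |a k| * (2 * M) ^ k := by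
    intro k y hy
    have hyM : |y| ≤ M := (mem_ball_zero_iff.mp hy).le
    have hk : (k : ℝ) ≤ 2 ^ k := by exact_mod_cast Nat.lt_two_pow_self.le
    have hpow : |y| ^ (k - 1) ≤ M ^ k :=
      (pow_le_pow_left₀ (abs_nonneg y) hyM _).trans (pow_le_pow_right₀ hM (Nat.sub_le k 1))
    rw [Real.norm_eq_abs, abs_mul, abs_mul, abs_pow, Nat.abs_cast, mul_pow]
    exact mul_le_mul_of_nonneg_left (mul_le_mul hk hpow (by positivity) (by positivity))
      (abs_nonneg _)
  have hderiv := hasDerivAt_tsum_of_isPreconnected (ha (2 * M)) Metric.isOpen_ball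
    (convex_ball 0 M).isPreconnected (fun k y _ => (hasDerivAt_pow k y).const_mul (a k)) hbound
    hx (summable_mul_pow_of_summable_abs ha x) hx
  refine hderiv.congr_deriv ?_
  rw [(Summable.of_norm_bounded (ha (2 * M)) (hbound · x hx)).tsum_eq_zero_add]
  simp only [CharP.cast_eq_zero, zero_mul, mul_zero, zero_add, Nat.cast_add, Nat.cast_one,
    add_tsub_cancel_right]
  exact tsum_congr fun k => by ring

end EntireSeries

section Bessel

noncomputable def besselI0Coeff (k : ℕ) : ℝ := ((k ! : ℝ) ^ 2)⁻¹

noncomputable def besselI1Coeff (k : ℕ) : ℝ := ((k ! : ℝ) * (k + 1)!)⁻¹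

theorem besselI0_eq_tsum (t : ℝ) : besselI0 t = ∑' k, besselI0Coeff k * (t ^ 2 / 4) ^ k := by
  simp only [besselI0, besselI0Coeff, div_eq_inv_mul]

theorem besselI1_eq_tsum (t : ℝ) :
    besselI1 t = t / 2 * ∑' k, besselI1Coeff k * (t ^ 2 / 4) ^ k := by
  simp only [besselI1, besselI1Coeff, div_eq_inv_mul]

theorem summable_abs_besselI0Coeff_mul_pow (r : ℝ) :
    Summable fun k => |besselI0Coeff k| * r ^ k :=
  summable_abs_mul_pow_of_abs_le_inv_factorial (fun k => by
    have h : (1 : ℝ) ≤ k ! := mod_cast k.factorial_pos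
    rw [besselI0Coeff, abs_of_pos (by positivity)]
    exact inv_anti₀ (by positivity) (by nlinarith)) r

theorem summable_abs_besselI1Coeff_mul_pow (r : ℝ) :
    Summable fun k => |besselI1Coeff k| * r ^ k :=
  summable_abs_mul_pow_of_abs_le_inv_factorial (fun k => by
    have h : (1 : ℝ) ≤ (k + 1)! := mod_cast (k + 1).factorial_pos
    rw [besselI1Coeff, abs_of_pos (by positivity)]
    exact inv_anti₀ (by positivity) (le_mul_of_one_le_right (by positivity) h)) r

theorem succ_mul_besselI0Coeff_succ (k : ℕ) :
    (k + 1) * besselI0Coeff (k + 1) = besselI1Coeff k := by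
  simp only [besselI0Coeff, besselI1Coeff, Nat.factorial_succ, Nat.cast_mul, Nat.cast_succ]
  field_simp

theorem succ_mul_besselI1Coeff_succ (k : ℕ) :
    (k + 1) * besselI1Coeff (k + 1) = besselI0Coeff (k + 1) - besselI1Coeff (k + 1) := by
  simp only [besselI0Coeff, besselI1Coeff, Nat.factorial_succ, Nat.cast_mul, Nat.cast_succ]
  field_simp
  ring

/-- Series form of `(x F₁(x))' = F₀(x)`, where `I₀(t) = F₀(t²/4)` and `I₁(t) = (t/2) F₁(t²/4)`. -/
theorem mul_tsum_succ_mul_besselI1Coeff_succ (x : ℝ) :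
    x * ∑' k, (k + 1) * besselI1Coeff (k + 1) * x ^ k
      = ∑' k, besselI0Coeff k * x ^ k - ∑' k, besselI1Coeff k * x ^ k := by
  have h0 := summable_mul_pow_of_summable_abs summable_abs_besselI0Coeff_mul_pow x
  have h1 := summable_mul_pow_of_summable_abs summable_abs_besselI1Coeff_mul_pow x
  have hzero : besselI0Coeff 0 * x ^ 0 - besselI1Coeff 0 * x ^ 0 = 0 := by
    simp [besselI0Coeff, besselI1Coeff]
  rw [← h0.tsum_sub h1, (h0.sub h1).tsum_eq_zero_add, hzero, zero_add, ← tsum_mul_left]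
  refine tsum_congr fun k => ?_
  rw [pow_succ, ← sub_mul, ← succ_mul_besselI1Coeff_succ]
  ring

theorem hasDerivAt_sq_div_four (t : ℝ) : HasDerivAt (fun t : ℝ => t ^ 2 / 4) (t / 2) t :=
  ((hasDerivAt_pow 2 t).div_const 4).congr_deriv (by norm_num; ring)

theorem hasDerivAt_besselI0 (t : ℝ) : HasDerivAt besselI0 (besselI1 t) t := by
  have h := (hasDerivAt_tsum_mul_pow summable_abs_besselI0Coeff_mul_pow (t ^ 2 / 4)).comp t
    (hasDerivAt_sq_div_four t)
  simp only [succ_mul_besselI0Coeff_succ] at h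
  rw [funext besselI0_eq_tsum, besselI1_eq_tsum, mul_comm]
  exact h

theorem hasDerivAt_besselI1 {t : ℝ} (ht : t ≠ 0) :
    HasDerivAt besselI1 (besselI0 t - besselI1 t / t) t := by
  have h := ((hasDerivAt_id t).div_const 2).mul
    ((hasDerivAt_tsum_mul_pow summable_abs_besselI1Coeff_mul_pow (t ^ 2 / 4)).comp t
      (hasDerivAt_sq_div_four t))
  rw [funext besselI1_eq_tsum]
  refine h.congr_deriv ?_
  have hx := mul_tsum_succ_mul_besselI1Coeff_succ (t ^ 2 / 4)
  simp only [Function.comp_apply, id, besselI0_eq_tsum]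
  rw [mul_div_right_comm, show t / 2 / t = 1 / 2 by field_simp]
  linear_combination hx

theorem besselI1_pos {t : ℝ} (ht : 0 < t) : 0 < besselI1 t := by
  have hle := (summable_mul_pow_of_summable_abs summable_abs_besselI1Coeff_mul_pow
    (t ^ 2 / 4)).le_tsum 0 fun k _ => by simp only [besselI1Coeff]; positivity
  have hzero : besselI1Coeff 0 * (t ^ 2 / 4) ^ 0 = 1 := by simp [besselI1Coeff]
  rw [besselI1_eq_tsum]
  exact mul_pos (by positivity) (one_pos.trans_le (hzero ▸ hle))

end Bessel

section Gluing

theorem continuousAt_ite_lt {α β : Type*} [TopologicalSpace α] [LinearOrder α]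
    [TopologicalSpace β] {u v : α → β} {R : α} (hu : ContinuousAt u R) (hv : ContinuousAt v R)
    (huv : u R = v R) : ContinuousAt (fun x => if x < R then u x else v x) R := by
  have hatR : (if R < R then u R else v R) = u R := by rw [if_neg (lt_irrefl R), huv]
  rw [continuousAt_iff_continuous_left_right]
  constructor
  · refine hu.continuousWithinAt.congr (fun x hx => ?_) hatR
    rcases (mem_Iic.mp hx).lt_or_eq with hlt | rfl
    · rw [if_pos hlt]
    · exact hatR
  · exact hv.continuousWithinAt.congr (fun x hx => if_neg (not_lt.mpr hx)) (if_neg (lt_irrefl R))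

variable {E : Type*} [NormedAddCommGroup E] [NormedSpace ℝ E] {f g f' g' : ℝ → E} {R : ℝ}

theorem hasDerivAt_ite_lt (hf : ∀ r ≤ R, HasDerivAt f (f' r) r)
    (hg : ∀ r, R ≤ r → HasDerivAt g (g' r) r) (hval : f R = g R) (hder : f' R = g' R) (r : ℝ) :
    HasDerivAt (fun x => if x < R then f x else g x) (if r < R then f' r else g' r) r := by
  rcases lt_trichotomy r R with hr | rfl | hr
  · rw [if_pos hr]
    refine (hf r hr.le).congr_of_eventuallyEq ?_
    filter_upwards [Iio_mem_nhds hr] with x hx using if_pos hx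
  · rw [if_neg (lt_irrefl r)]
    have hleft : HasDerivWithinAt (fun x => if x < r then f x else g x) (g' r) (Iic r) r := by
      refine (hder ▸ (hf r le_rfl).hasDerivWithinAt).congr (fun x hx => ?_) ?_
      · rcases (mem_Iic.mp hx).lt_or_eq with hlt | rfl
        · exact if_pos hlt
        · rw [if_neg (lt_irrefl x), hval]
      · rw [if_neg (lt_irrefl r), hval]
    have hright : HasDerivWithinAt (fun x => if x < r then f x else g x) (g' r) (Ici r) r :=
      (hg r le_rfl).hasDerivWithinAt.congr (fun x hx => if_neg (not_lt.mpr hx))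
        (if_neg (lt_irrefl r))
    simpa using hleft.union hright
  · rw [if_neg (not_lt.mpr hr.le)]
    refine (hg r hr.le).congr_of_eventuallyEq ?_
    filter_upwards [Ioi_mem_nhds hr] with x hx using if_neg (not_lt.mpr hx.le)

end Gluing

section SoftSphere

/-- Scattering length of the potential `v = 2c² χ_{B(0,R)}`, i.e. of `φ'' + φ'/r = c² φ` on
`(0, R)`. -/
noncomputable def softSphereScatteringLength (c R : ℝ) : ℝ :=
  R * Real.exp (-(besselI0 (c * R) / (c * R * besselI1 (c * R))))

noncomputable def softSphereScatteringSolution (c R : ℝ) (r : ℝ) : ℝ :=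
  if r < R then besselI0 (c * r) / (c * R * besselI1 (c * R))
  else Real.log (r / softSphereScatteringLength c R)

variable {c R : ℝ}

theorem hasDerivAt_softSphereScatteringSolution (hc : 0 < c) (hR : 0 < R) (r : ℝ) :
    HasDerivAt (softSphereScatteringSolution c R)
      (if r < R then c * besselI1 (c * r) / (c * R * besselI1 (c * R)) else r⁻¹) r := by
  have hI₁ : 0 < besselI1 (c * R) := besselI1_pos (by positivity)
  have ha : 0 < softSphereScatteringLength c R := by
    rw [softSphereScatteringLength]; positivity
  unfold softSphereScatteringSolution
  apply hasDerivAt_ite_lt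
  · intro x _
    refine (((hasDerivAt_besselI0 (c * x)).comp x ((hasDerivAt_id x).const_mul c)).div_const
      _).congr_deriv ?_
    simp only [mul_one]
    ring
  · intro x hx
    have hx : 0 < x := hR.trans_le hx
    refine ((hasDerivAt_id' x).div_const _).log (by positivity) |>.congr_deriv ?_
    field_simp
  · rw [Real.log_div hR.ne' ha.ne', softSphereScatteringLength,
      Real.log_mul hR.ne' (Real.exp_pos _).ne', Real.log_exp]
    ring
  · field_simp

theorem differentiable_softSphereScatteringSolution (hc : 0 < c) (hR : 0 < R) :
    Differentiable ℝ (softSphereScatteringSolution c R) :=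
  fun r => (hasDerivAt_softSphereScatteringSolution hc hR r).differentiableAt

theorem deriv_softSphereScatteringSolution (hc : 0 < c) (hR : 0 < R) :
    deriv (softSphereScatteringSolution c R)
      = fun r => if r < R then c * besselI1 (c * r) / (c * R * besselI1 (c * R)) else r⁻¹ :=
  funext fun r => (hasDerivAt_softSphereScatteringSolution hc hR r).deriv

theorem continuousAt_deriv_softSphereScatteringSolution (hc : 0 < c) (hR : 0 < R) :
    ContinuousAt (deriv (softSphereScatteringSolution c R)) R := by
  have hI₁ : 0 < besselI1 (c * R) := besselI1_pos (by positivity)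
  rw [deriv_softSphereScatteringSolution hc hR]
  refine continuousAt_ite_lt ?_ (continuousAt_inv₀ hR.ne') (by field_simp)
  have hI₁' := (hasDerivAt_besselI1 (mul_pos hc hR).ne').continuousAt
  exact (continuousAt_const.mul (hI₁'.comp (continuousAt_const.mul continuousAt_id))).div_const _

theorem deriv_deriv_softSphereScatteringSolution_add (hc : 0 < c) (hR : 0 < R) {r : ℝ}
    (hr : r ∈ Ioo 0 R) :
    deriv (deriv (softSphereScatteringSolution c R)) r
      + deriv (softSphereScatteringSolution c R) r / r
      = c ^ 2 * softSphereScatteringSolution c R r := by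
  have hcr : c * r ≠ 0 := (mul_pos hc hr.1).ne'
  have hderiv : HasDerivAt (fun x => c * besselI1 (c * x) / (c * R * besselI1 (c * R)))
      (c * ((besselI0 (c * r) - besselI1 (c * r) / (c * r)) * c) / (c * R * besselI1 (c * R)))
      r :=
    (((hasDerivAt_besselI1 hcr).comp r ((hasDerivAt_id r).const_mul c)).const_mul c).div_const _
      |>.congr_deriv (by simp only [mul_one])
  have hev : deriv (softSphereScatteringSolution c R)
      =ᶠ[𝓝 r] fun x => c * besselI1 (c * x) / (c * R * besselI1 (c * R)) := by
    rw [deriv_softSphereScatteringSolution hc hR]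
    filter_upwards [Iio_mem_nhds hr.2] with x hx using if_pos hx
  rw [(hderiv.congr_of_eventuallyEq hev).deriv, hev.eq_of_nhds, softSphereScatteringSolution,
    if_pos hr.2]
  field_simp
  ring

end SoftSphere

theorem statement18_general (W₀ R β : ℝ) (hW₀ : 0 < W₀) (hR : 0 < R) :
    ContinuousOn (phiScat2D W₀ R β) (Set.Ioi 0) ∧
    DifferentiableOn ℝ (phiScat2D W₀ R β) (Set.Ioi 0) ∧
    ContinuousAt (phiScat2D W₀ R β) R ∧
    ContinuousAt (deriv (phiScat2D W₀ R β)) R ∧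
    (∀ r ∈ Set.Ioo 0 R,
      deriv (deriv (phiScat2D W₀ R β)) r + deriv (phiScat2D W₀ R β) r / r
        = 1 / 2 * (W₀ / R ^ β) * phiScat2D W₀ R β r) ∧
    (∀ r : ℝ, R ≤ r → phiScat2D W₀ R β r = Real.log (r / aScat2D W₀ R β)) := by
  set c := Real.sqrt (W₀ / 2) * R ^ (-(β / 2)) with hc_def
  have hc : 0 < c := by positivity
  have hcR : c * R = Real.sqrt (W₀ / 2) * R ^ (1 - β / 2) := by
    rw [hc_def, mul_assoc, ← Real.rpow_add_one hR.ne']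
    ring_nf
  have hnorm : R ^ (β / 2 - 1) / Real.sqrt (W₀ / 2) = (c * R)⁻¹ := by
    rw [hcR, mul_inv, ← Real.rpow_neg hR.le, neg_sub, div_eq_inv_mul]
  have hc2 : c ^ 2 = 1 / 2 * (W₀ / R ^ β) := by
    rw [hc_def, mul_pow, Real.sq_sqrt (by positivity), ← Real.rpow_natCast,
      ← Real.rpow_mul hR.le, show -(β / 2) * (2 : ℕ) = -β by push_cast; ring,
      Real.rpow_neg hR.le]
    ring
  have hlength : aScat2D W₀ R β = softSphereScatteringLength c R := by
    rw [aScat2D, softSphereScatteringLength, hnorm, ← hcR]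
    ring_nf
  have hsolution : phiScat2D W₀ R β = softSphereScatteringSolution c R := by
    funext r
    rw [phiScat2D, softSphereScatteringSolution, hlength, hnorm, ← hcR, ← hc_def]
    split_ifs <;> ring
  rw [hsolution, hlength]
  have hdiff := differentiable_softSphereScatteringSolution hc hR
  exact ⟨hdiff.continuous.continuousOn, hdiff.differentiableOn, hdiff.continuous.continuousAt,
    continuousAt_deriv_softSphereScatteringSolution hc hR,
    fun r hr => by rw [deriv_deriv_softSphereScatteringSolution_add hc hR hr, hc2],
    fun r hr => if_neg (not_lt.mpr hr)⟩

/-- Scattering solution for the regularized homogeneous potential in 2D: `φ` as above is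
continuous on `(0,∞)`, differentiable on `(0,∞)` with value and derivative matching at `R`,
satisfies `φ'' + φ'/r = (1/2)(W₀/R^β)φ` on `(0,R)`, and `φ(r) = ln(r/a_β^R)` for `r ≥ R`
with `a_β^R` the stated 2D scattering length. -/
theorem statement18 (W₀ R β : ℝ) (hW₀ : 0 < W₀) (hR : 0 < R) (hβ : 0 < β) :
    ContinuousOn (phiScat2D W₀ R β) (Set.Ioi 0) ∧
    DifferentiableOn ℝ (phiScat2D W₀ R β) (Set.Ioi 0) ∧
    ContinuousAt (phiScat2D W₀ R β) R ∧
    ContinuousAt (deriv (phiScat2D W₀ R β)) R ∧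
    (∀ r ∈ Set.Ioo 0 R,
      deriv (deriv (phiScat2D W₀ R β)) r + deriv (phiScat2D W₀ R β) r / r
        = 1 / 2 * (W₀ / R ^ β) * phiScat2D W₀ R β r) ∧
    (∀ r : ℝ, R ≤ r → phiScat2D W₀ R β r = Real.log (r / aScat2D W₀ R β)) :=
  statement18_general W₀ R β hW₀ hR
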